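/- Let ξ ≠ 0 in ℝ², and let F₀ : ℝ² × ℝ → ℝ², G_ξ : ℝ² × ℝ → ℝ², J : ℝ² × ℝ² → ℝ² be real analytic with F₀(0, λ₁) ≡ 0 for all λ₁ and G_ξ(ξ, λ₂) ≡ 0 for all λ₂, and suppose D_xF₀(0, λ₁) = [[a(λ₁), −b(λ₁)], [b(λ₁), a(λ₁)]] and D_xG_ξ(ξ, λ₂) = [[c(λ₂), −d(λ₂)], [d(λ₂), c(λ₂)]] where a, b, c, d : ℝ → ℝ are continuous and a(0) ≠ 0, c(0) ≠ 0. Define the map 𝒫(x, λ) = x + 2π[λ₁F₀(x, λ₁) + λ₁λ₂J(x, λ) + λ₂G_ξ(x, λ₂)]. Then there exists ω* > 0 such that: (i) 𝒫(0, (λ₁, 0)) = 0 for all |λ₁| < ω* and 𝒫(ξ, (0, λ₂)) = ξ for all |λ₂| < ω*; and (ii) for all 0 < |λ₁| < ω*, both eigenvalues of D_x𝒫(0, (λ₁, 0)) lie strictly inside the unit circle if λ₁ a(0) < 0 and strictly outside if λ₁ a(0) > 0, and for all 0 < |λ₂| < ω*, both eigenvalues of D_x𝒫(ξ, (0, λ₂))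 lie strictly inside the unit circle if λ₂ c(0) < 0 and strictly outside if λ₂ c(0) > 0. -/

import Mathlib

open Real Matrix

/-- The general (non-truncated) two-inhomogeneity map
`𝒫(x,λ) = x + 2π[λ₁F₀(x,λ₁) + λ₁λ₂J(x,λ) + λ₂G_ξ(x,λ₂)]`. -/
noncomputable def PmapGen (F : (Fin 2 → ℝ) → ℝ → Fin 2 → ℝ)
    (G : (Fin 2 → ℝ) → ℝ → Fin 2 → ℝ) (J : (Fin 2 → ℝ) → ℝ × ℝ → Fin 2 → ℝ)
    (x : Fin 2 → ℝ) (l : ℝ × ℝ) : Fin 2 → ℝ :=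
  x + (2 * π) • (l.1 • F x l.1 + (l.1 * l.2) • J x l + l.2 • G x l.2)

/-- The (complex) eigenvalues of a real `2 × 2` matrix: its spectrum viewed over `ℂ`. -/
noncomputable def eigM (M : Matrix (Fin 2) (Fin 2) ℝ) : Set ℂ :=
  spectrum ℂ (M.map (algebraMap ℝ ℂ))

/-- Any eigenvalue of `1 + s • !![p,-q;q,p]` has squared norm `(1+sp)² + (sq)²`. -/
theorem eig_norm_sq (s p q : ℝ) {μ : ℂ}
    (hμ : μ ∈ eigM (1 + s • !![p, -q; q, p])) :
    ‖μ‖^2 = (1 + s*p)^2 + (s*q)^2 := by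
  rw [eigM, spectrum.mem_iff] at hμ
  rw [Matrix.isUnit_iff_isUnit_det, isUnit_iff_ne_zero, not_not] at hμ
  rw [Matrix.det_fin_two] at hμ
  simp [Matrix.sub_apply, Matrix.map_apply, Matrix.add_apply, Matrix.smul_apply,
    Matrix.one_apply, Matrix.algebraMap_matrix_apply] at hμ
  have hre : (μ.re - (1 + s*p))^2 - μ.im^2 + (s*q)^2 = 0 := by
    have := congrArg Complex.re hμ
    simp [Complex.add_re, Complex.mul_re, Complex.sub_re,
      Complex.ofReal_re, Complex.ofReal_im] at this
    nlinarith [this]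
  have him : (μ.re - (1 + s*p)) * μ.im = 0 := by
    have := congrArg Complex.im hμ
    simp [Complex.add_im, Complex.mul_im, Complex.sub_im,
      Complex.ofReal_re, Complex.ofReal_im] at this
    nlinarith [this]
  have hn : ‖μ‖^2 = μ.re^2 + μ.im^2 := by
    rw [Complex.sq_norm, Complex.normSq_apply]; ring
  rw [hn]
  rcases mul_eq_zero.mp him with h | h
  · have : μ.re = 1 + s*p := by linarith
    rw [this]; nlinarith [hre]
  · rw [h] at hre ⊢
    nlinarith [sq_nonneg (μ.re - (1 + s*p)), sq_nonneg (s*q)]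

theorem stab_in (s p q : ℝ) (hsp : s * p < 0) (hsm : |s| * (p^2+q^2) < |p|) {μ : ℂ}
    (hμ : μ ∈ eigM (1 + s • !![p, -q; q, p])) : ‖μ‖ < 1 := by
  have h := eig_norm_sq s p q hμ
  have hs0 : s ≠ 0 := by rintro rfl; simp at hsp
  have hs : (0:ℝ) < |s| := abs_pos.mpr hs0
  have habs : |s| * |p| = -(s*p) := by rw [← abs_mul, abs_of_neg hsp]
  have hsq : |s|^2 = s^2 := sq_abs s
  have hlt : ‖μ‖^2 < 1 := by
    rw [h]
    nlinarith [mul_lt_mul_of_pos_left hsm hs]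
  nlinarith [norm_nonneg μ]

theorem stab_out (s p q : ℝ) (hsp : 0 < s * p) {μ : ℂ}
    (hμ : μ ∈ eigM (1 + s • !![p, -q; q, p])) : 1 < ‖μ‖ := by
  have h := eig_norm_sq s p q hμ
  have hlt : 1 < ‖μ‖^2 := by
    rw [h]; nlinarith [sq_nonneg (s*p), sq_nonneg (s*q)]
  nlinarith [norm_nonneg μ]

theorem deriv_lemma (F : (Fin 2 → ℝ) → Fin 2 → ℝ) (M : Matrix (Fin 2) (Fin 2) ℝ)
    (x0 : Fin 2 → ℝ) (s : ℝ)
    (hDF : HasFDerivAt F M.mulVecLin.toContinuousLinearMap x0) :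
    HasFDerivAt (fun x => x + s • F x)
      (Matrix.mulVecLin ((1 : Matrix (Fin 2) (Fin 2) ℝ) + s • M)).toContinuousLinearMap x0 := by
  have h := (hasFDerivAt_id x0).add (hDF.const_smul s)
  refine HasFDerivAt.congr_fderiv h ?_
  apply ContinuousLinearMap.ext
  intro v
  simp [Matrix.add_mulVec, Matrix.smul_mulVec]

/-- **(P1)–(P2) of Proposition 4.6 (themappingprop2) of the paper.**
For the general two-inhomogeneity map `𝒫`, `0` and `ξ` are fixed points along the
respective parameter axes, hyperbolic for small nonzero parameter, with stability
determined by `sign(λ₁ a(0))`, resp. `sign(λ₂ c(0))`. -/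
theorem general_map_axis_fixed_points (ξ : Fin 2 → ℝ) (hξ : ξ ≠ 0)
    (F : (Fin 2 → ℝ) → ℝ → Fin 2 → ℝ) (G : (Fin 2 → ℝ) → ℝ → Fin 2 → ℝ)
    (J : (Fin 2 → ℝ) → ℝ × ℝ → Fin 2 → ℝ)
    (hFa : AnalyticOnNhd ℝ (fun q : (Fin 2 → ℝ) × ℝ => F q.1 q.2) Set.univ)
    (hGa : AnalyticOnNhd ℝ (fun q : (Fin 2 → ℝ) × ℝ => G q.1 q.2) Set.univ)
    (hJa : AnalyticOnNhd ℝ (fun q : (Fin 2 → ℝ) × (ℝ × ℝ) => J q.1 q.2) Set.univ)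
    (hF0 : ∀ l1 : ℝ, F 0 l1 = 0) (hGξ : ∀ l2 : ℝ, G ξ l2 = 0)
    (a b c d : ℝ → ℝ)
    (hac : Continuous a) (hbc : Continuous b) (hcc : Continuous c) (hdc : Continuous d)
    (ha0 : a 0 ≠ 0) (hc0 : c 0 ≠ 0)
    (hDF : ∀ l1 : ℝ, HasFDerivAt (fun x => F x l1)
      (Matrix.mulVecLin !![a l1, -(b l1); b l1, a l1]).toContinuousLinearMap 0)
    (hDG : ∀ l2 : ℝ, HasFDerivAt (fun x => G x l2)
      (Matrix.mulVecLin !![c l2, -(d l2); d l2, c l2]).toContinuousLinearMap ξ) :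
    ∃ ω > (0:ℝ),
      (∀ l1 : ℝ, |l1| < ω → PmapGen F G J 0 (l1, 0) = 0) ∧
      (∀ l2 : ℝ, |l2| < ω → PmapGen F G J ξ (0, l2) = ξ) ∧
      (∀ l1 : ℝ, 0 < |l1| → |l1| < ω →
        HasFDerivAt (fun x => PmapGen F G J x (l1, 0))
          (Matrix.mulVecLin ((1 : Matrix (Fin 2) (Fin 2) ℝ)
            + (2 * π * l1) • !![a l1, -(b l1); b l1, a l1])).toContinuousLinearMap 0 ∧
        (l1 * a 0 < 0 →
          ∀ μ ∈ eigM ((1 : Matrix (Fin 2) (Fin 2) ℝ)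
              + (2 * π * l1) • !![a l1, -(b l1); b l1, a l1]), ‖μ‖ < 1) ∧
        (l1 * a 0 > 0 →
          ∀ μ ∈ eigM ((1 : Matrix (Fin 2) (Fin 2) ℝ)
              + (2 * π * l1) • !![a l1, -(b l1); b l1, a l1]), 1 < ‖μ‖)) ∧
      (∀ l2 : ℝ, 0 < |l2| → |l2| < ω →
        HasFDerivAt (fun x => PmapGen F G J x (0, l2))
          (Matrix.mulVecLin ((1 : Matrix (Fin 2) (Fin 2) ℝ)
            + (2 * π * l2) • !![c l2, -(d l2); d l2, c l2])).toContinuousLinearMap ξ ∧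
        (l2 * c 0 < 0 →
          ∀ μ ∈ eigM ((1 : Matrix (Fin 2) (Fin 2) ℝ)
              + (2 * π * l2) • !![c l2, -(d l2); d l2, c l2]), ‖μ‖ < 1) ∧
        (l2 * c 0 > 0 →
          ∀ μ ∈ eigM ((1 : Matrix (Fin 2) (Fin 2) ℝ)
              + (2 * π * l2) • !![c l2, -(d l2); d l2, c l2]), 1 < ‖μ‖)) := by
  -- choose ω by continuity
  have hφa : Continuous (fun l => 2*π*|l| * ((a l)^2 + (b l)^2) - |a l|) := by
    fun_prop
  have hφc : Continuous (fun l => 2*π*|l| * ((c l)^2 + (d l)^2) - |c l|) := by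
    fun_prop
  have hψa : Continuous (fun l => a l * a 0) := by fun_prop
  have hψc : Continuous (fun l => c l * c 0) := by fun_prop
  have e1 : ∀ᶠ l in nhds (0:ℝ), 2*π*|l| * ((a l)^2 + (b l)^2) - |a l| < 0 := by
    apply (hφa.continuousAt (x := 0)).eventually_lt_const
    simp [abs_pos.mpr ha0]
  have e2 : ∀ᶠ l in nhds (0:ℝ), 2*π*|l| * ((c l)^2 + (d l)^2) - |c l| < 0 := by
    apply (hφc.continuousAt (x := 0)).eventually_lt_const
    simp [abs_pos.mpr hc0]
  have e3 : ∀ᶠ l in nhds (0:ℝ), 0 < a l * a 0 := by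
    apply (hψa.continuousAt (x := 0)).eventually_const_lt
    exact mul_self_pos.mpr ha0
  have e4 : ∀ᶠ l in nhds (0:ℝ), 0 < c l * c 0 := by
    apply (hψc.continuousAt (x := 0)).eventually_const_lt
    exact mul_self_pos.mpr hc0
  obtain ⟨ω, hω, hball⟩ := Metric.eventually_nhds_iff.mp (((e1.and e2).and (e3.and e4)))
  refine ⟨ω, hω, ?_, ?_, ?_, ?_⟩
  · intro l1 _
    funext i
    simp [PmapGen, hF0]
  · intro l2 _
    funext i
    simp [PmapGen, hGξ]
  · intro l1 hl1 hl1ω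
    have hb := hball (y := l1) (by simpa [Real.dist_eq] using hl1ω)
    obtain ⟨⟨hφ, _⟩, ⟨hψ, _⟩⟩ := hb
    have heq : (fun x => PmapGen F G J x (l1, 0)) = fun x => x + (2*π*l1) • F x l1 := by
      funext x
      simp [PmapGen, smul_smul]
    refine ⟨?_, ?_, ?_⟩
    · rw [heq]; exact deriv_lemma _ _ _ _ (hDF l1)
    · intro hsign μ hμ
      refine stab_in (2*π*l1) (a l1) (b l1) ?_ ?_ hμ
      · have : l1 * a l1 < 0 := by nlinarith [sq_nonneg (a 0)]
        nlinarith [Real.pi_pos]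
      · have hpi : |2*π*l1| = 2*π*|l1| := by
          rw [abs_mul, abs_of_pos (by positivity : (0:ℝ) < 2*π)]
        rw [hpi]; linarith
    · intro hsign μ hμ
      refine stab_out (2*π*l1) (a l1) (b l1) ?_ hμ
      have : 0 < l1 * a l1 := by nlinarith [sq_nonneg (a 0)]
      nlinarith [Real.pi_pos]
  · intro l2 hl2 hl2ω
    have hb := hball (y := l2) (by simpa [Real.dist_eq] using hl2ω)
    obtain ⟨⟨_, hφ⟩, ⟨_, hψ⟩⟩ := hb
    have heq : (fun x => PmapGen F G J x (0, l2)) = fun x => x + (2*π*l2) • G x l2 := by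
      funext x
      simp [PmapGen, smul_smul]
    refine ⟨?_, ?_, ?_⟩
    · rw [heq]; exact deriv_lemma _ _ _ _ (hDG l2)
    · intro hsign μ hμ
      refine stab_in (2*π*l2) (c l2) (d l2) ?_ ?_ hμ
      · have : l2 * c l2 < 0 := by nlinarith [sq_nonneg (c 0)]
        nlinarith [Real.pi_pos]
      · have hpi : |2*π*l2| = 2*π*|l2| := by
          rw [abs_mul, abs_of_pos (by positivity : (0:ℝ) < 2*π)]
        rw [hpi]; linarith
    · intro hsign μ hμ
      refine stab_out (2*π*l2) (c l2) (d l2) ?_ hμ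
      have : 0 < l2 * c l2 := by nlinarith [sq_nonneg (c 0)]
      nlinarith [Real.pi_pos]
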